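/- For every integer n ≥ 1 and every continuous function f : [0,1] → ℝ, the functions U_n^ρ f converge uniformly on [0,1], as ρ → ∞, to the classical Bernstein polynomial B_n f, where B_n f(x) = ∑_{k=0}^n f(k/n) p_{n,k}(x). -/

import Mathlib

open MeasureTheory

/-- Euler Beta function `B(a,b) = ∫₀¹ t^(a-1) (1-t)^(b-1) dt`. -/
noncomputable def betaFn (a b : ℝ) : ℝ :=
  ∫ t in (0:ℝ)..1, t ^ (a - 1) * (1 - t) ^ (b - 1)

/-- The functionals `F_{n,k}^ρ`. -/
noncomputable def Ffun (n k : ℕ) (ρ : ℝ) (f : ℝ → ℝ) : ℝ :=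
  if k = 0 then f 0
  else if k = n then f 1
  else (betaFn ((k : ℝ) * ρ) (((n : ℝ) - (k : ℝ)) * ρ))⁻¹ *
    ∫ t in (0:ℝ)..1, t ^ ((k : ℝ) * ρ - 1) * (1 - t) ^ (((n : ℝ) - (k : ℝ)) * ρ - 1) * f t

/-- Bernstein basis polynomial `p_{n,k}(x)`. -/
noncomputable def bern (n k : ℕ) (x : ℝ) : ℝ :=
  (n.choose k : ℝ) * x ^ k * (1 - x) ^ (n - k)

/-- The operator `U_n^ρ`. -/
noncomputable def Uop (n : ℕ) (ρ : ℝ) (f : ℝ → ℝ) (x : ℝ) : ℝ :=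
  ∑ k ∈ Finset.range (n + 1), Ffun n k ρ f * bern n k x

/-! For `0 < k < n`, `F_{n,k}^ρ(f)` is the mean of `f` against the Beta(kρ, (n-k)ρ) density,
whose mean is `k/n` and whose variance `k(n-k) / (n²(nρ+1))` tends to `0` as `ρ → ∞`. A
Chebyshev-type bound `|f t - f m| ≤ ε + C (t - m)²` therefore gives `F_{n,k}^ρ(f) → f(k/n)`; for
`k = 0` and `k = n` the functional already equals `f(k/n)`. Since `U_n^ρ f - B_n f` is a fixed
finite combination of the `p_{n,k}`, which are bounded by `1` on `[0,1]`, convergence of the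
coefficients is uniform convergence on `[0,1]`. -/

open Filter Set Topology

structure IsProbDensityOnUnitInterval (w : ℝ → ℝ) : Prop where
  intervalIntegrable : IntervalIntegrable w volume 0 1
  nonneg : ∀ t ∈ Icc (0 : ℝ) 1, 0 ≤ w t
  integral_eq_one : ∫ t in (0 : ℝ)..1, w t = 1

theorem exists_abs_sub_le_add_mul_sq {f : ℝ → ℝ} {s : Set ℝ} {m ε : ℝ} (hs : IsCompact s)
    (hf : ContinuousOn f s) (hm : m ∈ s) (hε : 0 < ε) :
    ∃ C, ∀ t ∈ s, |f t - f m| ≤ ε + C * (t - m) ^ 2 := by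
  obtain ⟨δ, hδ, hnear⟩ := Metric.continuousWithinAt_iff.1 (hf m hm) ε hε
  obtain ⟨M, hM⟩ := hs.exists_bound_of_continuousOn (hf.sub (continuousOn_const (c := f m)))
  refine ⟨M / δ ^ 2, fun t ht => ?_⟩
  have hMt : |f t - f m| ≤ M := hM t ht
  have hM0 : 0 ≤ M := (abs_nonneg _).trans hMt
  rcases lt_or_ge |t - m| δ with hclose | hfar
  · have h := hnear ht hclose
    rw [Real.dist_eq] at h
    have : 0 ≤ M / δ ^ 2 * (t - m) ^ 2 := by positivity
    linarith
  · have hsq : δ ^ 2 ≤ (t - m) ^ 2 := sq_le_sq.2 (by rwa [abs_of_pos hδ])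
    have : M ≤ M / δ ^ 2 * (t - m) ^ 2 := by
      rw [div_mul_eq_mul_div, le_div_iff₀ (by positivity)]
      exact mul_le_mul_of_nonneg_left hsq hM0
    linarith

theorem IsProbDensityOnUnitInterval.abs_integral_mul_sub_le {w f : ℝ → ℝ} {m ε C : ℝ}
    (hw : IsProbDensityOnUnitInterval w) (hf : ContinuousOn f (Icc 0 1))
    (hfm : ∀ t ∈ Icc (0 : ℝ) 1, |f t - f m| ≤ ε + C * (t - m) ^ 2) :
    |(∫ t in (0 : ℝ)..1, w t * f t) - f m| ≤ ε + C * ∫ t in (0 : ℝ)..1, w t * (t - m) ^ 2 := by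
  have hint : ∀ {g : ℝ → ℝ}, ContinuousOn g (Icc 0 1) →
      IntervalIntegrable (fun t => w t * g t) volume 0 1 := fun hg =>
    hw.intervalIntegrable.mul_continuousOn (by rwa [uIcc_of_le zero_le_one])
  have hsub : (∫ t in (0 : ℝ)..1, w t * f t) - f m = ∫ t in (0 : ℝ)..1, w t * (f t - f m) := by
    simp only [mul_sub]
    rw [intervalIntegral.integral_sub (hint hf) (hw.intervalIntegrable.mul_const _),
      intervalIntegral.integral_mul_const, hw.integral_eq_one, one_mul]
  have hmajorant : ∫ t in (0 : ℝ)..1, w t * (ε + C * (t - m) ^ 2) =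
      ε + C * ∫ t in (0 : ℝ)..1, w t * (t - m) ^ 2 := by
    simp only [mul_add, mul_left_comm (w _) C]
    rw [intervalIntegral.integral_add (hw.intervalIntegrable.mul_const _)
        ((hint (by fun_prop)).const_mul C),
      intervalIntegral.integral_mul_const, intervalIntegral.integral_const_mul,
      hw.integral_eq_one, one_mul]
  rw [hsub, ← hmajorant]
  refine (intervalIntegral.abs_integral_le_integral_abs zero_le_one).trans
    (intervalIntegral.integral_mono_on zero_le_one (hint (hf.sub continuousOn_const)).abs
      (hint (by fun_prop)) fun t ht => ?_)
  rw [abs_mul, abs_of_nonneg (hw.nonneg t ht)]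
  exact mul_le_mul_of_nonneg_left (hfm t ht) (hw.nonneg t ht)

theorem tendsto_integral_mul_of_tendsto_integral_mul_sub_sq {ι : Type*} {l : Filter ι}
    {w : ι → ℝ → ℝ} {f : ℝ → ℝ} {m : ℝ} (hw : ∀ᶠ i in l, IsProbDensityOnUnitInterval (w i))
    (hm : m ∈ Icc (0 : ℝ) 1) (hf : ContinuousOn f (Icc 0 1))
    (hvar : Tendsto (fun i => ∫ t in (0 : ℝ)..1, w i t * (t - m) ^ 2) l (𝓝 0)) :
    Tendsto (fun i => ∫ t in (0 : ℝ)..1, w i t * f t) l (𝓝 (f m)) := by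
  rw [Metric.tendsto_nhds]
  intro ε hε
  obtain ⟨C, hC⟩ := exists_abs_sub_le_add_mul_sq isCompact_Icc hf hm (half_pos hε)
  have hsmall : ∀ᶠ i in l, C * ∫ t in (0 : ℝ)..1, w i t * (t - m) ^ 2 < ε / 2 :=
    (hvar.const_mul C).eventually (gt_mem_nhds (by simpa using half_pos hε))
  filter_upwards [hw, hsmall] with i hwi hi
  rw [Real.dist_eq]
  linarith [hwi.abs_integral_mul_sub_le hf hC]

theorem integral_mul_sub_sq {w : ℝ → ℝ} (hw : IntervalIntegrable w volume 0 1) (m : ℝ) :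
    ∫ t in (0 : ℝ)..1, w t * (t - m) ^ 2 =
      (∫ t in (0 : ℝ)..1, w t * t ^ 2) - 2 * m * (∫ t in (0 : ℝ)..1, w t * t) +
        m ^ 2 * ∫ t in (0 : ℝ)..1, w t := by
  have h2 : IntervalIntegrable (fun t => w t * t ^ 2) volume 0 1 :=
    hw.mul_continuousOn (by fun_prop)
  have h1 : IntervalIntegrable (fun t => w t * t) volume 0 1 :=
    hw.mul_continuousOn continuousOn_id
  calc ∫ t in (0 : ℝ)..1, w t * (t - m) ^ 2
      = ∫ t in (0 : ℝ)..1, (w t * t ^ 2 - 2 * m * (w t * t)) + m ^ 2 * w t :=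
        intervalIntegral.integral_congr fun t _ => by ring
    _ = _ := by
        rw [intervalIntegral.integral_add (h2.sub (h1.const_mul _)) (hw.const_mul _),
          intervalIntegral.integral_sub h2 (h1.const_mul _), intervalIntegral.integral_const_mul,
          intervalIntegral.integral_const_mul]

theorem tendstoUniformlyOn_finset_sum_mul {ι κ α : Type*} {l : Filter ι} (s : Finset κ)
    {c : ι → κ → ℝ} {c₀ : κ → ℝ} {g : κ → α → ℝ} {S : Set α} {C : ℝ}
    (hc : ∀ k ∈ s, Tendsto (fun i => c i k) l (𝓝 (c₀ k)))
    (hg : ∀ k ∈ s, ∀ x ∈ S, |g k x| ≤ C) :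
    TendstoUniformlyOn (fun i x => ∑ k ∈ s, c i k * g k x) (fun x => ∑ k ∈ s, c₀ k * g k x)
      l S := by
  have herr : Tendsto (fun i => C * ∑ k ∈ s, |c₀ k - c i k|) l (𝓝 0) := by
    simpa using (tendsto_finsetSum s fun k hk => ((hc k hk).const_sub (c₀ k)).abs).const_mul C
  rw [Metric.tendstoUniformlyOn_iff]
  intro ε hε
  filter_upwards [herr.eventually (gt_mem_nhds hε)] with i hi x hx
  rw [Real.dist_eq, ← Finset.sum_sub_distrib]
  calc |∑ k ∈ s, (c₀ k * g k x - c i k * g k x)|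
      ≤ ∑ k ∈ s, |c₀ k - c i k| * C := by
        refine (Finset.abs_sum_le_sum_abs _ _).trans (Finset.sum_le_sum fun k hk => ?_)
        rw [← sub_mul, abs_mul]
        exact mul_le_mul_of_nonneg_left (hg k hk x hx) (abs_nonneg _)
    _ = C * ∑ k ∈ s, |c₀ k - c i k| := by rw [← Finset.sum_mul, mul_comm]
    _ < ε := hi

noncomputable def betaKernel (a b t : ℝ) : ℝ := t ^ (a - 1) * (1 - t) ^ (b - 1)

theorem integral_betaKernel (a b : ℝ) : ∫ t in (0 : ℝ)..1, betaKernel a b t = betaFn a b := rfl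

theorem ofReal_betaFn (a b : ℝ) : (betaFn a b : ℂ) = Complex.betaIntegral a b := by
  rw [Complex.betaIntegral, betaFn, ← intervalIntegral.integral_ofReal]
  refine intervalIntegral.integral_congr fun t ht => ?_
  rw [uIcc_of_le zero_le_one] at ht
  rw [Complex.ofReal_mul, Complex.ofReal_cpow ht.1, Complex.ofReal_cpow (sub_nonneg.2 ht.2)]
  push_cast
  rfl

theorem betaFn_eq_Gamma {a b : ℝ} (ha : 0 < a) (hb : 0 < b) :
    betaFn a b = Real.Gamma a * Real.Gamma b / Real.Gamma (a + b) := by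
  have h := Complex.Gamma_mul_Gamma_eq_betaIntegral (s := a) (t := b)
    (by simpa using ha) (by simpa using hb)
  rw [← ofReal_betaFn, ← Complex.ofReal_add, Complex.Gamma_ofReal, Complex.Gamma_ofReal,
    Complex.Gamma_ofReal] at h
  rw [eq_div_iff (Real.Gamma_pos_of_pos (add_pos ha hb)).ne']
  exact_mod_cast (h.trans (mul_comm _ _)).symm

theorem betaFn_pos {a b : ℝ} (ha : 0 < a) (hb : 0 < b) : 0 < betaFn a b := by
  rw [betaFn_eq_Gamma ha hb]
  have := Real.Gamma_pos_of_pos ha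
  have := Real.Gamma_pos_of_pos hb
  have := Real.Gamma_pos_of_pos (add_pos ha hb)
  positivity

theorem betaFn_add_one {a b : ℝ} (ha : 0 < a) (hb : 0 < b) :
    betaFn (a + 1) b = a / (a + b) * betaFn a b := by
  have hab : a + b ≠ 0 := (add_pos ha hb).ne'
  have := (Real.Gamma_pos_of_pos (add_pos ha hb)).ne'
  rw [betaFn_eq_Gamma (by linarith) hb, betaFn_eq_Gamma ha hb, Real.Gamma_add_one ha.ne',
    add_right_comm, Real.Gamma_add_one hab]
  field_simp

-- The kernel is integrable because its integral `betaFn a b` is nonzero.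
theorem intervalIntegrable_betaKernel {a b : ℝ} (ha : 0 < a) (hb : 0 < b) :
    IntervalIntegrable (betaKernel a b) volume 0 1 := by
  by_contra h
  exact (betaFn_pos ha hb).ne' (intervalIntegral.integral_undef h)

theorem betaKernel_mul_self {a b t : ℝ} (ha : a ≠ 0) (ht : 0 ≤ t) :
    betaKernel a b t * t = betaKernel (a + 1) b t := by
  have h := Real.rpow_add_one' ht (show a - 1 + 1 ≠ 0 by simpa using ha)
  rw [sub_add_cancel] at h
  rw [betaKernel, betaKernel, add_sub_cancel_right, h]
  ring

theorem integral_betaKernel_mul_self {a b : ℝ} (ha : 0 < a) (hb : 0 < b) :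
    ∫ t in (0 : ℝ)..1, betaKernel a b t * t = a / (a + b) * betaFn a b := by
  rw [← betaFn_add_one ha hb, betaFn]
  refine intervalIntegral.integral_congr fun t ht => ?_
  rw [uIcc_of_le zero_le_one] at ht
  exact betaKernel_mul_self ha.ne' ht.1

theorem integral_betaKernel_mul_sq {a b : ℝ} (ha : 0 < a) (hb : 0 < b) :
    ∫ t in (0 : ℝ)..1, betaKernel a b t * t ^ 2 =
      (a + 1) / (a + b + 1) * (a / (a + b)) * betaFn a b := by
  have h : ∫ t in (0 : ℝ)..1, betaKernel a b t * t ^ 2 =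
      ∫ t in (0 : ℝ)..1, betaKernel (a + 1) b t * t := by
    refine intervalIntegral.integral_congr fun t ht => ?_
    rw [uIcc_of_le zero_le_one] at ht
    rw [← betaKernel_mul_self ha.ne' ht.1]
    ring
  rw [h, integral_betaKernel_mul_self (by linarith) hb, betaFn_add_one ha hb, add_right_comm]
  ring

noncomputable def betaDensity (a b t : ℝ) : ℝ := (betaFn a b)⁻¹ * betaKernel a b t

theorem isProbDensityOnUnitInterval_betaDensity {a b : ℝ} (ha : 0 < a) (hb : 0 < b) :
    IsProbDensityOnUnitInterval (betaDensity a b) where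
  intervalIntegrable := (intervalIntegrable_betaKernel ha hb).const_mul _
  nonneg t ht := mul_nonneg (inv_nonneg.2 (betaFn_pos ha hb).le)
    (mul_nonneg (Real.rpow_nonneg ht.1 _) (Real.rpow_nonneg (sub_nonneg.2 ht.2) _))
  integral_eq_one := by
    simp only [betaDensity]
    rw [intervalIntegral.integral_const_mul, integral_betaKernel]
    exact inv_mul_cancel₀ (betaFn_pos ha hb).ne'

theorem integral_betaDensity_mul_sub_sq {a b : ℝ} (ha : 0 < a) (hb : 0 < b) :
    ∫ t in (0 : ℝ)..1, betaDensity a b t * (t - a / (a + b)) ^ 2 =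
      a * b / ((a + b) ^ 2 * (a + b + 1)) := by
  have hB := (betaFn_pos ha hb).ne'
  have hab : a + b ≠ 0 := (add_pos ha hb).ne'
  have hab1 : a + b + 1 ≠ 0 := by positivity
  simp only [betaDensity, mul_assoc]
  rw [intervalIntegral.integral_const_mul, integral_mul_sub_sq (intervalIntegrable_betaKernel ha hb),
    integral_betaKernel_mul_sq ha hb, integral_betaKernel_mul_self ha hb, integral_betaKernel]
  field_simp
  ring

theorem Ffun_eq_integral_betaDensity {n k : ℕ} (hk0 : k ≠ 0) (hkn : k ≠ n) (ρ : ℝ)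
    (f : ℝ → ℝ) :
    Ffun n k ρ f = ∫ t in (0 : ℝ)..1, betaDensity (k * ρ) ((n - k) * ρ) t * f t := by
  rw [Ffun, if_neg hk0, if_neg hkn, ← intervalIntegral.integral_const_mul]
  simp only [betaDensity, betaKernel, mul_assoc]

theorem tendsto_Ffun {n k : ℕ} (hkn : k ≤ n) {f : ℝ → ℝ} (hf : ContinuousOn f (Icc 0 1)) :
    Tendsto (fun ρ => Ffun n k ρ f) atTop (𝓝 (f (k / n))) := by
  rcases eq_or_ne k 0 with rfl | hk0
  · simp [Ffun]
  rcases eq_or_ne k n with rfl | hkn'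
  · simp [Ffun, hk0]
  have hk : (0 : ℝ) < k := by positivity
  have hnk : (0 : ℝ) < n - k := sub_pos.2 (by exact_mod_cast lt_of_le_of_ne hkn hkn')
  have hn : (0 : ℝ) < n := by linarith
  have hvar : ∀ᶠ ρ in atTop,
      k * (n - k) / n ^ 2 / (n * ρ + 1) =
        ∫ t in (0 : ℝ)..1, betaDensity (k * ρ) ((n - k) * ρ) t * (t - k / n) ^ 2 := by
    filter_upwards [eventually_gt_atTop 0] with ρ hρ
    have hmean : (k : ℝ) / n = k * ρ / (k * ρ + (n - k) * ρ) := by field_simp; ring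
    rw [hmean, integral_betaDensity_mul_sub_sq (by positivity) (by positivity)]
    field_simp
    ring
  simp only [Ffun_eq_integral_betaDensity hk0 hkn']
  refine tendsto_integral_mul_of_tendsto_integral_mul_sub_sq ?_
    ⟨by positivity, div_le_one_of_le₀ (by exact_mod_cast hkn) hn.le⟩ hf
    ((tendsto_const_nhds.div_atTop ?_).congr' hvar)
  · filter_upwards [eventually_gt_atTop 0] with ρ hρ
    exact isProbDensityOnUnitInterval_betaDensity (by positivity) (by positivity)
  · exact tendsto_atTop_add_const_right _ 1 (tendsto_id.const_mul_atTop hn)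

theorem sum_bern (n : ℕ) (x : ℝ) : ∑ k ∈ Finset.range (n + 1), bern n k x = 1 := by
  have h := add_pow x (1 - x) n
  rw [add_sub_cancel, one_pow] at h
  rw [h]
  exact Finset.sum_congr rfl fun k _ => by rw [bern]; ring

theorem bern_nonneg {n k : ℕ} {x : ℝ} (hx : x ∈ Icc (0 : ℝ) 1) : 0 ≤ bern n k x := by
  have := hx.1
  have := sub_nonneg.2 hx.2
  unfold bern
  positivity

theorem abs_bern_le_one {n k : ℕ} {x : ℝ} (hk : k ≤ n) (hx : x ∈ Icc (0 : ℝ) 1) :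
    |bern n k x| ≤ 1 := by
  rw [abs_of_nonneg (bern_nonneg hx), ← sum_bern n x]
  exact Finset.single_le_sum (f := fun j => bern n j x) (fun _ _ => bern_nonneg hx)
    (Finset.mem_range.2 (Nat.lt_succ_of_le hk))

theorem Uop_tendstoUniformlyOn_bernstein_general (n : ℕ)
    (f : ℝ → ℝ) (hf : ContinuousOn f (Set.Icc 0 1)) :
    TendstoUniformlyOn (fun (ρ : ℝ) (x : ℝ) => Uop n ρ f x)
      (fun x => ∑ k ∈ Finset.range (n + 1), f ((k : ℝ) / (n : ℝ)) * bern n k x)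
      Filter.atTop (Set.Icc 0 1) :=
  tendstoUniformlyOn_finset_sum_mul (Finset.range (n + 1))
    (fun _ hk => tendsto_Ffun (Nat.lt_succ_iff.1 (Finset.mem_range.1 hk)) hf)
    (fun _ hk _ hx => abs_bern_le_one (Nat.lt_succ_iff.1 (Finset.mem_range.1 hk)) hx)

/-- For every `n ≥ 1` and continuous `f : [0,1] → ℝ`, the functions `U_n^ρ f`
converge uniformly on `[0,1]`, as `ρ → ∞`, to the Bernstein polynomial
`B_n f(x) = ∑_{k=0}^n f(k/n) p_{n,k}(x)`. -/
theorem Uop_tendstoUniformlyOn_bernstein (n : ℕ) (hn : 1 ≤ n)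
    (f : ℝ → ℝ) (hf : ContinuousOn f (Set.Icc 0 1)) :
    TendstoUniformlyOn (fun (ρ : ℝ) (x : ℝ) => Uop n ρ f x)
      (fun x => ∑ k ∈ Finset.range (n + 1), f ((k : ℝ) / (n : ℝ)) * bern n k x)
      Filter.atTop (Set.Icc 0 1) :=
  Uop_tendstoUniformlyOn_bernstein_general n f hf
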